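/- arXiv:1612.04151 — 6 statements merged into one kernel-verified Lean document; each statement's English description precedes it below -/
import Mathlib

section
/- Let Φ be the Gneiting function τ_{2,7/2} with support size c > 0 and let Δ > 0. If c > 5.09 Δ, then Δ · Φ'(r) > -1/√2 for all r ∈ [0, c]. -/
/-!
With `s = √(1 - r/c)` the derivative on `[0, c]` is `Φ'(r) = -(99/(16c)) · s⁵(15s² - 7)(1 - s²)`,
which also covers the endpoint `r = c` because `t ↦ max t 0 ^ (7/2)` is differentiable at `0`.
The profile `s⁵(15s² - 7)(1 - s²)` peaks near `s² ≈ 0.8274` with value `≈ 0.58158 < 0.58166`, so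
`Δ·|Φ'(r)| < (99/16) · 0.58166 / 5.09 ≈ 0.70708 < 1/√2 ≈ 0.70711`.
-/

open Real Set

theorem hasDerivAt_max_zero_rpow {p : ℝ} (hp : 1 < p) (x : ℝ) :
    HasDerivAt (fun t : ℝ => max t 0 ^ p) (p * max x 0 ^ (p - 1)) x := by
  have hp0 : p ≠ 0 := by positivity
  have hp1 : p - 1 ≠ 0 := sub_ne_zero.mpr hp.ne'
  rcases lt_trichotomy x 0 with hx | rfl | hx
  · rw [max_eq_right hx.le, zero_rpow hp1, mul_zero]
    refine (hasDerivAt_const x 0).congr_of_eventuallyEq ?_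
    filter_upwards [Iio_mem_nhds hx] with t ht
    rw [max_eq_right ht.le, zero_rpow hp0]
  · rw [max_self, zero_rpow hp1, mul_zero]
    have hleft : HasDerivWithinAt (fun t : ℝ => max t 0 ^ p) 0 (Iic 0) 0 :=
      (hasDerivWithinAt_const 0 _ 0).congr (fun t ht => by rw [max_eq_right ht, zero_rpow hp0])
        (by rw [max_self, zero_rpow hp0])
    have hright : HasDerivWithinAt (fun t : ℝ => max t 0 ^ p) 0 (Ici 0) 0 := by
      have h := (hasDerivAt_rpow_const (x := 0) (Or.inr hp.le)).hasDerivWithinAt (s := Ici 0)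
      rw [zero_rpow hp1, mul_zero] at h
      exact h.congr (fun t ht => by rw [max_eq_left ht]) (by rw [max_self])
    simpa only [Iic_union_Ici, hasDerivWithinAt_univ] using hleft.union hright
  · rw [max_eq_left hx.le]
    refine (hasDerivAt_rpow_const (Or.inl hx.ne')).congr_of_eventuallyEq ?_
    filter_upwards [Ioi_mem_nhds hx] with t ht
    rw [max_eq_left ht.le]

noncomputable def gneitingSevenHalves (c r : ℝ) : ℝ :=
  max (1 - r / c) 0 ^ ((7 : ℝ) / 2) * (1 + 7 / 2 * (r / c) - 135 / 8 * (r / c) ^ 2)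

theorem hasDerivAt_gneitingSevenHalves {c r : ℝ} (hc : 0 < c) (hr : r ≤ c) :
    HasDerivAt (gneitingSevenHalves c)
      (-(99 / (16 * c)) *
        (√(1 - r / c) ^ 5 * (15 * √(1 - r / c) ^ 2 - 7) * (1 - √(1 - r / c) ^ 2))) r := by
  have hu : 0 ≤ 1 - r / c := sub_nonneg.mpr ((div_le_one hc).mpr hr)
  have hdiv : HasDerivAt (fun x : ℝ => x / c) (1 / c) r := (hasDerivAt_id r).div_const c
  have hpow := (hasDerivAt_max_zero_rpow (by norm_num : (1 : ℝ) < 7 / 2) (1 - r / c)).comp r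
    (hdiv.const_sub 1)
  have hpoly : HasDerivAt (fun x : ℝ => 1 + 7 / 2 * (x / c) - 135 / 8 * (x / c) ^ 2)
      (7 / 2 * (1 / c) - 135 / 8 * (2 * (r / c) ^ 1 * (1 / c))) r :=
    ((hdiv.const_mul _).const_add 1).sub ((hdiv.pow 2).const_mul _)
  refine (hpow.mul hpoly).congr_deriv ?_
  simp only [Function.comp_apply]
  rw [max_eq_left hu, show (7 : ℝ) / 2 - 1 = 5 / 2 by norm_num, rpow_div_two_eq_sqrt _ hu,
    rpow_div_two_eq_sqrt _ hu, rpow_ofNat, rpow_ofNat]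
  set s := √(1 - r / c)
  rw [show r / c = 1 - s ^ 2 by rw [sq_sqrt hu]; ring]
  field_simp
  ring

theorem gneitingSevenHalves_profile_le {s : ℝ} (hs : 0 ≤ s) :
    s ^ 5 * (15 * s ^ 2 - 7) * (1 - s ^ 2) ≤ 0.58166 := by
  nlinarith [sq_nonneg (s - 0.9096), mul_nonneg hs (sq_nonneg (s ^ 2 - 0.8274)),
    mul_nonneg (pow_nonneg hs 3) (sq_nonneg (s ^ 2 - 0.8274)),
    sq_nonneg (s ^ 2 * (s ^ 2 - 0.8274)), sq_nonneg (s * (s ^ 2 - 0.8274))]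

theorem threshold_lt_inv_sqrt_two : (99 / 16 * 0.58166 / 5.09 : ℝ) < 1 / √2 := by
  rw [one_div, ← sqrt_inv, lt_sqrt (by norm_num)]
  norm_num

/-- One-landmark topology preservation for τ_{2,7/2}: if c > 5.09 Δ then
Δ·Φ'(r) > -1/√2 on [0,c]. -/
theorem gneiting_7half_topology (c Δ : ℝ) (hc : 0 < c) (hΔ : 0 < Δ)
    (Φ : ℝ → ℝ)
    (hΦ : ∀ r : ℝ, Φ r =
      (max (1 - r / c) 0) ^ ((7 : ℝ) / 2) *
        (1 + (7 / 2) * (r / c) - (135 / 8) * (r / c) ^ 2))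
    (hcΔ : c > 5.09 * Δ) :
    ∀ r ∈ Set.Icc (0 : ℝ) c, Δ * deriv Φ r > -(1 / Real.sqrt 2) := by
  obtain rfl : Φ = gneitingSevenHalves c := funext hΦ
  rintro r ⟨-, hrc⟩
  rw [(hasDerivAt_gneitingSevenHalves hc hrc).deriv]
  set P := √(1 - r / c) ^ 5 * (15 * √(1 - r / c) ^ 2 - 7) * (1 - √(1 - r / c) ^ 2)
  have hP : P ≤ 0.58166 := gneitingSevenHalves_profile_le (sqrt_nonneg _)
  have hratio : Δ / c < 1 / 5.09 := by
    rw [div_lt_div_iff₀ hc (by norm_num)]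
    linarith
  calc Δ * (-(99 / (16 * c)) * P) = -(99 / 16 * (Δ / c) * P) := by ring
    _ ≥ -(99 / 16 * (Δ / c) * 0.58166) := by gcongr
    _ > -(99 / 16 * (1 / 5.09) * 0.58166) := by gcongr
    _ > -(1 / √2) := by linarith [threshold_lt_inv_sqrt_two]
end

section
/- Let Φ be the Gneiting function τ_{2,5} with support size c > 0 and let Δ > 0. If c > 6.26 Δ, then Δ · Φ'(r) > -1/√2 for all r ∈ [0, c]. -/
/-!
Writing `Φ r = τ (r / c)` with `τ u = (1 - u)₊⁵ (1 + 5u - 27u²)`, one computes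
`τ' u = 21 u (9u - 4) (1 - u)⁴` for `u ≤ 1`. This polynomial is bounded below by `-4.4264`
(its minimum is `≈ -4.42637`), so `Δ Φ'(r) = (Δ / c) τ'(r / c) > -4.4264 / 6.26 > -1 / √2`.
-/

open Set

theorem hasDerivAt_max_zero_pow {n : ℕ} (hn : 2 ≤ n) (x : ℝ) :
    HasDerivAt (fun y : ℝ => max y 0 ^ n) (n * max x 0 ^ (n - 1)) x := by
  have hn1 : n - 1 ≠ 0 := by omega
  rcases lt_trichotomy x 0 with hx | rfl | hx
  · rw [max_eq_right hx.le, zero_pow hn1, mul_zero]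
    refine (hasDerivAt_const x (0 : ℝ)).congr_of_eventuallyEq ?_
    filter_upwards [gt_mem_nhds hx] with y hy
    rw [max_eq_right hy.le, zero_pow (by omega)]
  · rw [max_self, zero_pow hn1, mul_zero]
    have hleft : HasDerivWithinAt (fun y : ℝ => max y 0 ^ n) 0 (Iic 0) 0 :=
      (hasDerivWithinAt_const 0 _ (0 : ℝ)).congr (fun y hy => by
        rw [max_eq_right hy, zero_pow (by omega)]) (by simp [zero_pow (by omega : n ≠ 0)])
    have hright : HasDerivWithinAt (fun y : ℝ => max y 0 ^ n) 0 (Ici 0) 0 := by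
      have := (hasDerivAt_pow n (0 : ℝ)).hasDerivWithinAt (s := Ici 0)
      rw [zero_pow hn1, mul_zero] at this
      exact this.congr (fun y hy => by rw [max_eq_left hy]) (by rw [max_self])
    simpa using hleft.union hright
  · rw [max_eq_left hx.le]
    refine (hasDerivAt_pow n x).congr_of_eventuallyEq ?_
    filter_upwards [lt_mem_nhds hx] with y hy
    rw [max_eq_left hy.le]

noncomputable def gneitingTau25 (u : ℝ) : ℝ := max (1 - u) 0 ^ 5 * (1 + 5 * u - 27 * u ^ 2)

theorem hasDerivAt_gneitingTau25 {u : ℝ} (hu : u ≤ 1) :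
    HasDerivAt gneitingTau25 (21 * u * (9 * u - 4) * (1 - u) ^ 4) u := by
  have hcut : HasDerivAt (fun v : ℝ => max (1 - v) 0 ^ 5) (5 * (1 - u) ^ 4 * -1) u := by
    have := (hasDerivAt_max_zero_pow (n := 5) (by norm_num) (1 - u)).comp u
      ((hasDerivAt_id' u).const_sub 1)
    rwa [max_eq_left (sub_nonneg.2 hu), Nat.cast_ofNat] at this
  have hpoly : HasDerivAt (fun v : ℝ => 1 + 5 * v - 27 * v ^ 2) (5 - 54 * u) u :=
    ((((hasDerivAt_id' u).const_mul 5).const_add 1).sub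
      ((hasDerivAt_pow 2 u).const_mul 27)).congr_deriv (by norm_num; ring)
  refine (hcut.mul hpoly).congr_deriv ?_
  rw [max_eq_left (sub_nonneg.2 hu)]
  ring

/- The derivative of this polynomial is `-42 (1 - u)³ (27u² - 19u + 2)`, hence the hints. -/
theorem gneitingTau25_deriv_ge (u : ℝ) : -4.4264 ≤ 21 * u * (9 * u - 4) * (1 - u) ^ 4 := by
  nlinarith [sq_nonneg (27 * u ^ 2 - 19 * u + 2), sq_nonneg ((1 - u) * (27 * u ^ 2 - 19 * u + 2)),
    sq_nonneg (u * (1 - u)), sq_nonneg (u - 1 / 8)]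

theorem mul_sqrt_two_lt_six_point_two_six : 4.4264 * Real.sqrt 2 < 6.26 := by
  nlinarith [Real.sq_sqrt (show (0 : ℝ) ≤ 2 by norm_num), Real.sqrt_nonneg 2]

theorem gneiting_25_topology_general (c Δ : ℝ) (hΔ : 0 < Δ)
    (Φ : ℝ → ℝ)
    (hΦ : ∀ r : ℝ, Φ r =
      (max (1 - r / c) 0) ^ (5 : ℕ) *
        (1 + 5 * (r / c) - 27 * (r / c) ^ 2))
    (hcΔ : c > 6.26 * Δ) :
    ∀ r ∈ Set.Icc (0 : ℝ) c, Δ * deriv Φ r > -(1 / Real.sqrt 2) := by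
  rintro r ⟨-, hrc⟩
  have hc : 0 < c := by linarith
  set u := r / c
  have hΦ' : HasDerivAt Φ (21 * u * (9 * u - 4) * (1 - u) ^ 4 * (1 / c)) r := by
    rw [show Φ = fun r => gneitingTau25 (r / c) from funext hΦ]
    exact (hasDerivAt_gneitingTau25 ((div_le_one hc).2 hrc)).comp r
      ((hasDerivAt_id r).div_const c)
  have hratio : Δ / c < 1 / 6.26 := by
    rw [div_lt_div_iff₀ hc (by norm_num)]
    linarith
  rw [hΦ'.deriv, gt_iff_lt]
  calc -(1 / Real.sqrt 2) < -4.4264 / 6.26 := by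
        rw [neg_div, neg_lt_neg_iff, div_lt_div_iff₀ (by norm_num) (by positivity)]
        linarith [mul_sqrt_two_lt_six_point_two_six]
    _ < -4.4264 * (Δ / c) := by linarith
    _ ≤ 21 * u * (9 * u - 4) * (1 - u) ^ 4 * (Δ / c) :=
        mul_le_mul_of_nonneg_right (gneitingTau25_deriv_ge u) (by positivity)
    _ = Δ * (21 * u * (9 * u - 4) * (1 - u) ^ 4 * (1 / c)) := by ring

/-- One-landmark topology preservation for τ_{2,5}: if c > 6.26 Δ then
Δ·Φ'(r) > -1/√2 on [0,c]. -/
theorem gneiting_25_topology (c Δ : ℝ) (hc : 0 < c) (hΔ : 0 < Δ)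
    (Φ : ℝ → ℝ)
    (hΦ : ∀ r : ℝ, Φ r =
      (max (1 - r / c) 0) ^ (5 : ℕ) *
        (1 + 5 * (r / c) - 27 * (r / c) ^ 2))
    (hcΔ : c > 6.26 * Δ) :
    ∀ r ∈ Set.Icc (0 : ℝ) c, Δ * deriv Φ r > -(1 / Real.sqrt 2) :=
  gneiting_25_topology_general c Δ hΔ Φ hΦ hcΔ
end

section
/- Let P(r) = 1 - (99/4) r² + (1155/16) r³ (the cubic Taylor approximation of τ_{2,7/2}), and set α(c) = P(√2/c), β(c) = P(2/c). Then c³·[(1 + β(c))² - 4 α(c)²] → 1155(2 - √2) as c → ∞. -/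
/-! The quadratic terms cancel in `1 + P(2/c) - 2 P(√2/c)` because `(2/c)² = 2 (√2/c)²`,
leaving exactly `(8 - 4√2) b / c³` for `P r = 1 + a r² + b r³`. Hence
`c³ [(1 + β)² - 4α²] = (8 - 4√2) b · (1 + β + 2α)`, and the last factor tends to `4`
since `P` is continuous with `P 0 = 1`. -/

open Filter Topology Real

section RhombusCubic

variable {P : ℝ → ℝ} {a b : ℝ}

theorem cube_mul_one_add_sub_two_mul_eq (hP : ∀ r, P r = 1 + a * r ^ 2 + b * r ^ 3)
    {c : ℝ} (hc : c ≠ 0) :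
    c ^ 3 * (1 + P (2 / c) - 2 * P (√2 / c)) = 4 * (2 - √2) * b := by
  have hs : √2 ^ 2 = 2 := sq_sqrt zero_le_two
  rw [hP, hP, div_pow, div_pow, div_pow, div_pow, hs,
    show √2 ^ 3 = 2 * √2 by rw [pow_succ, hs]]
  field_simp
  ring

theorem tendsto_one_add_add_two_mul (hP : ∀ r, P r = 1 + a * r ^ 2 + b * r ^ 3) :
    Tendsto (fun c : ℝ => 1 + P (2 / c) + 2 * P (√2 / c)) atTop (𝓝 4) := by
  have hcont : Continuous P := by
    rw [show P = fun r => 1 + a * r ^ 2 + b * r ^ 3 from funext hP]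
    fun_prop
  have hP0 : P 0 = 1 := by simp [hP]
  have hlim : ∀ k : ℝ, Tendsto (fun c : ℝ => P (k / c)) atTop (𝓝 1) := fun k =>
    hP0 ▸ (hcont.tendsto 0).comp (tendsto_const_nhds.div_atTop tendsto_id)
  convert (tendsto_const_nhds (x := (1 : ℝ))).add (hlim 2) |>.add ((hlim √2).const_mul 2)
    using 2
  norm_num

theorem tendsto_cube_mul_sq_sub_four_mul_sq (hP : ∀ r, P r = 1 + a * r ^ 2 + b * r ^ 3) :
    Tendsto (fun c : ℝ => c ^ 3 * ((1 + P (2 / c)) ^ 2 - 4 * P (√2 / c) ^ 2)) atTop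
      (𝓝 (16 * (2 - √2) * b)) := by
  have hlim := (tendsto_one_add_add_two_mul hP).const_mul (4 * (2 - √2) * b)
  rw [show 4 * (2 - √2) * b * 4 = 16 * (2 - √2) * b by ring] at hlim
  refine hlim.congr' ?_
  filter_upwards [eventually_ne_atTop 0] with c hc
  rw [← cube_mul_one_add_sub_two_mul_eq hP hc]
  ring

end RhombusCubic

/-- For P(r) = 1 - (99/4)r² + (1155/16)r³, α(c) = P(√2/c), β(c) = P(2/c), one has
c³·[(1+β(c))² - 4α(c)²] → 1155(2 - √2) as c → ∞. -/
theorem gneiting_7half_fourlandmark_asymptotics (P : ℝ → ℝ)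
    (hP : ∀ r : ℝ, P r = 1 - (99 / 4) * r ^ 2 + (1155 / 16) * r ^ 3) :
    Filter.Tendsto
      (fun c : ℝ => c ^ 3 * ((1 + P (2 / c)) ^ 2 - 4 * (P (Real.sqrt 2 / c)) ^ 2))
      Filter.atTop (nhds (1155 * (2 - Real.sqrt 2))) := by
  have hP' : ∀ r, P r = 1 + (-99 / 4) * r ^ 2 + (1155 / 16) * r ^ 3 := fun r => by
    rw [hP]; ring
  convert tendsto_cube_mul_sq_sub_four_mul_sq hP' using 2
  ring
end

section
/- For all y > 1, the function f(y) = y² + 1 - y√(y² + 1) satisfies 1/2 < f(y) < 2 - √2, and f is strictly decreasing on (1, ∞) with limit 1/2 as y → ∞. -/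
open Real Filter Set Topology

/-! Writing `s = √(y² + 1)`, the identity `s² - y² = 1` gives `f y = s / (s + y) = 1 / (1 + y / s)`.
The map `y ↦ y / s` is odd, strictly increasing and tends to `1`, so `f` is strictly decreasing on
all of `ℝ`, stays above `1 / 2`, and tends to `1 / 2`; the upper bound is `f 1 = 2 - √2`. -/

lemma abs_lt_sqrt_sq_add_one (y : ℝ) : |y| < √(y ^ 2 + 1) := by
  rw [← sqrt_sq_eq_abs]
  exact sqrt_lt_sqrt (sq_nonneg y) (lt_add_one _)

lemma abs_div_sqrt_sq_add_one_lt_one (y : ℝ) : |y / √(y ^ 2 + 1)| < 1 := by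
  have hs : 0 < √(y ^ 2 + 1) := sqrt_pos.2 (by positivity)
  rw [abs_div, abs_of_pos hs, div_lt_one hs]
  exact abs_lt_sqrt_sq_add_one y

lemma sq_add_one_sub_mul_sqrt_eq_inv (y : ℝ) :
    y ^ 2 + 1 - y * √(y ^ 2 + 1) = (1 + y / √(y ^ 2 + 1))⁻¹ := by
  have hs2 : √(y ^ 2 + 1) ^ 2 = y ^ 2 + 1 := sq_sqrt (by positivity)
  have hs : 0 < √(y ^ 2 + 1) := sqrt_pos.2 (by positivity)
  have hsy : 0 < √(y ^ 2 + 1) + y := by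
    linarith [neg_abs_le y, abs_lt_sqrt_sq_add_one y]
  rw [one_add_div hs.ne', inv_div, eq_div_iff hsy.ne']
  linear_combination (-y) * hs2

lemma strictMono_div_sqrt_sq_add_one : StrictMono fun y : ℝ => y / √(y ^ 2 + 1) := by
  refine strictMono_of_odd_strictMonoOn_nonneg (fun y => by simp [neg_div]) ?_
  intro a (ha : 0 ≤ a) b (hb : 0 ≤ b) hab
  have hsa : 0 < √(a ^ 2 + 1) := sqrt_pos.2 (by positivity)
  have hsb : 0 < √(b ^ 2 + 1) := sqrt_pos.2 (by positivity)
  rw [div_lt_div_iff₀ hsa hsb]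
  refine lt_of_pow_lt_pow_left₀ 2 (by positivity) ?_
  rw [mul_pow, mul_pow, sq_sqrt (by positivity), sq_sqrt (by positivity)]
  nlinarith [mul_self_lt_mul_self ha hab]

lemma tendsto_div_sqrt_sq_add_one_atTop :
    Tendsto (fun y : ℝ => y / √(y ^ 2 + 1)) atTop (𝓝 1) := by
  have hlower : Tendsto (fun y : ℝ => 1 - y⁻¹) atTop (𝓝 1) := by
    simpa using tendsto_inv_atTop_zero.const_sub (1 : ℝ)
  refine tendsto_of_tendsto_of_tendsto_of_le_of_le' hlower tendsto_const_nhds ?_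
    (Eventually.of_forall fun y => (abs_lt.1 (abs_div_sqrt_sq_add_one_lt_one y)).2.le)
  filter_upwards [eventually_ge_atTop 1] with y hy
  have hs : √(y ^ 2 + 1) ≤ y + 1 :=
    sqrt_le_iff.2 ⟨by linarith, by nlinarith⟩
  have hy0 : 0 < y := by linarith
  rw [le_div_iff₀ (sqrt_pos.2 (by positivity))]
  calc (1 - y⁻¹) * √(y ^ 2 + 1) ≤ (1 - y⁻¹) * (y + 1) :=
        mul_le_mul_of_nonneg_left hs (sub_nonneg.2 (inv_le_one_of_one_le₀ hy))
    _ = y - y⁻¹ := by field_simp; ring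
    _ ≤ y := sub_le_self y (inv_nonneg.2 hy0.le)

/-- For f(y) = y² + 1 - y√(y²+1) on (1,∞): 1/2 < f(y) < 2 - √2, f is strictly
decreasing on (1,∞), and f(y) → 1/2 as y → ∞. -/
theorem fourlandmark_factor_bounds (f : ℝ → ℝ)
    (hf : ∀ y : ℝ, f y = y ^ 2 + 1 - y * Real.sqrt (y ^ 2 + 1)) :
    (∀ y : ℝ, 1 < y → 1 / 2 < f y ∧ f y < 2 - Real.sqrt 2) ∧
    StrictAntiOn f (Set.Ioi 1) ∧
    Filter.Tendsto f Filter.atTop (nhds (1 / 2)) := by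
  have hf' : f = fun y => (1 + y / √(y ^ 2 + 1))⁻¹ :=
    funext fun y => (hf y).trans (sq_add_one_sub_mul_sqrt_eq_inv y)
  have hpos (y : ℝ) : 0 < 1 + y / √(y ^ 2 + 1) := by
    linarith [(abs_lt.1 (abs_div_sqrt_sq_add_one_lt_one y)).1]
  have hanti : StrictAnti f := fun a b hab => by
    simpa only [hf'] using (inv_lt_inv₀ (hpos b) (hpos a)).2
      (add_lt_add_right (strictMono_div_sqrt_sq_add_one hab) 1)
  have hf_one : f 1 = 2 - √2 := by norm_num [hf]
  have hhalf (y : ℝ) : 1 / 2 < f y := by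
    rw [hf', one_div, inv_lt_inv₀ two_pos (hpos y)]
    linarith [(abs_lt.1 (abs_div_sqrt_sq_add_one_lt_one y)).2]
  refine ⟨fun y hy => ⟨hhalf y, hf_one ▸ hanti hy⟩, hanti.strictAntiOn _, ?_⟩
  rw [hf']
  convert (tendsto_div_sqrt_sq_add_one_atTop.const_add 1).inv₀ (by norm_num) using 2; norm_num
end

section
/- In the four-landmark rhombus configuration, the linear system for the y-component coefficients has the explicit solution c_{2,1} = Δ(β² + β - 2α²)/((1-β)((1+β)² - 4α²)), c_{2,2} = c_{2,4} = Δ α/((1+β)² - 4α²), c_{2,3} = -Δ(1 + β - 2α²)/((1-β)((1+β)² - 4α²)), provided (1-β)((1+β)² - 4α²) ≠ 0. -/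
/-!
The interpolation matrix is circulant (rows `1, α, β, α` shifted), so the system splits along the
reflection `P₁ ↔ P₃`, `P₂ ↔ P₄` of the rhombus. Differences of opposite equations give
`(1 - β)(c₂ - c₄) = 0` and `(1 - β)(c₁ - c₃) = Δ`; sums give a symmetric `2 × 2` system for
`c₁ + c₃` and `c₂ + c₄` with determinant `(1 + β)² - 4α²`, solved by Cramer's rule.
-/

theorem mul_det_eq_of_symm_two_by_two {R : Type*} [CommRing R] {a b u v x y : R}
    (hx : a * x + b * y = u) (hy : b * x + a * y = v) :
    x * (a ^ 2 - b ^ 2) = a * u - b * v ∧ y * (a ^ 2 - b ^ 2) = a * v - b * u :=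
  ⟨by linear_combination a * hx - b * hy, by linear_combination a * hy - b * hx⟩

/-- Explicit solution of the four-landmark rhombus interpolation system for
the y-component coefficients. -/
theorem fourlandmark_system_solution (α β Δ c1 c2 c3 c4 : ℝ)
    (hne : (1 - β) * ((1 + β) ^ 2 - 4 * α ^ 2) ≠ 0)
    (e1 : c1 + α * c2 + β * c3 + α * c4 = 0)
    (e2 : α * c1 + c2 + α * c3 + β * c4 = 0)
    (e3 : β * c1 + α * c2 + c3 + α * c4 = -Δ)
    (e4 : α * c1 + β * c2 + α * c3 + c4 = 0) :
    c1 = Δ * (β ^ 2 + β - 2 * α ^ 2) / ((1 - β) * ((1 + β) ^ 2 - 4 * α ^ 2)) ∧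
    c2 = Δ * α / ((1 + β) ^ 2 - 4 * α ^ 2) ∧
    c3 = -(Δ * (1 + β - 2 * α ^ 2)) / ((1 - β) * ((1 + β) ^ 2 - 4 * α ^ 2)) ∧
    c4 = c2 := by
  have hc4 : c4 = c2 := by
    have h : (1 - β) * (c2 - c4) = 0 := by linear_combination e2 - e4
    linarith [(mul_eq_zero.mp h).resolve_left (left_ne_zero_of_mul hne)]
  have hdiff : (c1 - c3) * (1 - β) = Δ := by linear_combination e1 - e3
  obtain ⟨hsum13, hsum24⟩ := mul_det_eq_of_symm_two_by_two
    (a := 1 + β) (b := 2 * α) (u := -Δ) (v := 0) (x := c1 + c3) (y := c2 + c4)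
    (by linear_combination e1 + e3) (by linear_combination e2 + e4)
  refine ⟨?_, ?_, ?_, hc4⟩
  · rw [eq_div_iff hne]
    linear_combination ((1 - β) * hsum13 + ((1 + β) ^ 2 - 4 * α ^ 2) * hdiff) / 2
  · rw [eq_div_iff (right_ne_zero_of_mul hne)]
    linear_combination (hsum24 - ((1 + β) ^ 2 - 4 * α ^ 2) * hc4) / 2
  · rw [eq_div_iff hne]
    linear_combination ((1 - β) * hsum13 - ((1 + β) ^ 2 - 4 * α ^ 2) * hdiff) / 2
end

section
/- The Gneiting function τ_{2,7/2}(r) = (1 - r)^{7/2}(1 + (7/2) r - (135/8) r²), extended by zero for r > 1, is of class C² on [0, ∞). -/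
/-!
On the real line Mathlib's `x ^ p` is the real part of the complex power, `|x| ^ p * cos (p * π)`
for `x < 0`. For `p = 7/2` this vanishes, so `x ^ (7/2)` already is the truncated power
`x₊ ^ (7/2)`, and it is `C²` on all of `ℝ` because `2 ≤ 7/2`. Hence
`τ r = (1 - r) ^ (7/2) * (1 + 7/2 r - 135/8 r²)` for every `r`, a product of `C²` functions.
-/

open Real

theorem Real.rpow_eq_zero_of_neg_of_cos_eq_zero {x p : ℝ} (hx : x < 0) (hp : cos (p * π) = 0) :
    x ^ p = 0 := by
  rw [rpow_def_of_neg hx, hp, mul_zero]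

theorem Real.contDiff_truncated_rpow {p : ℝ} {n : ℕ} (hn : (n : ℝ) ≤ p) (hp : cos (p * π) = 0) :
    ContDiff ℝ n fun x : ℝ => if 0 ≤ x then x ^ p else 0 := by
  have htrunc : (fun x : ℝ => if 0 ≤ x then x ^ p else 0) = fun x => x ^ p := by
    funext x
    split_ifs with hx
    · rfl
    · exact (rpow_eq_zero_of_neg_of_cos_eq_zero (not_le.mp hx) hp).symm
  rw [htrunc]
  exact contDiff_rpow_const_of_le hn

/-- The Gneiting function τ_{2,7/2}, extended by zero for r > 1, is of class C²
on [0,∞). -/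
theorem gneiting_7half_C2 (τ : ℝ → ℝ)
    (hτ : ∀ r : ℝ, τ r =
      if r ≤ 1 then
        (1 - r) ^ ((7 : ℝ) / 2) * (1 + (7 / 2) * r - (135 / 8) * r ^ 2)
      else 0) :
    ContDiffOn ℝ 2 τ (Set.Ici (0 : ℝ)) := by
  have hcos : cos ((7 : ℝ) / 2 * π) = 0 := cos_eq_zero_iff.mpr ⟨3, by push_cast; ring⟩
  have htrunc : ContDiff ℝ 2 fun x : ℝ => if 0 ≤ x then x ^ ((7 : ℝ) / 2) else 0 :=
    contDiff_truncated_rpow (n := 2) (by norm_num) hcos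
  have hprod : ContDiff ℝ 2 fun r : ℝ =>
      (if 0 ≤ 1 - r then (1 - r) ^ ((7 : ℝ) / 2) else 0) * (1 + (7 / 2) * r - (135 / 8) * r ^ 2) :=
    (htrunc.comp (contDiff_const.sub contDiff_id)).mul (by fun_prop)
  refine hprod.contDiffOn.congr fun r _ => ?_
  simp only [hτ r, sub_nonneg, ite_mul, zero_mul]
end
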